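/- arXiv:1712.01781 — 2 statements merged into one kernel-verified Lean document; each statement's English description precedes it below -/
import Mathlib

section
/- Let n be an odd prime and let z : Z_n → {0,1}. Then the sum over all pairs (x,d) in Z_n × Z_n of z(x)z(x+d)z(x+2d) + (1-z(x))(1-z(x+d))(1-z(x+2d)) equals n^2 - 3n·a + 3a^2, where a = |{i : z(i) = 1}|. -/
/-!
Since `x y w + (1 - x)(1 - y)(1 - w) = 1 - x - y - w + x y + x w + y w`, the cubic terms cancel
and the count splits into sums over `(x, d)` of single values `z (x + i d)`, each equal to `n a`,
and of products `z (x + i d) z (x + j d)`, each equal to `a²` because the map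
`(x, d) ↦ (x + i d, x + j d)` is a bijection of `R × R` as soon as `j - i` is a unit (here the
differences are `1` and `2`, and `2` is a unit modulo an odd `n`).
-/

open Finset

section ThreeTermPatterns

variable {R S : Type*} [CommRing R] [Fintype R] [CommRing S]

theorem sum_add_unit_mul_eq_sum (z : R → S) (x : R) {u : R} (hu : IsUnit u) :
    ∑ d, z (x + u * d) = ∑ y, z y :=
  Fintype.sum_equiv ((Units.mulLeft hu.unit).trans (Equiv.addLeft x)) _ _ fun _ => rfl

theorem sum_prod_add_mul (z : R → S) (c : R) :
    ∑ p : R × R, z (p.1 + c * p.2) = Fintype.card R * ∑ y, z y := by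
  have hshift (d : R) : ∑ x, z (x + c * d) = ∑ y, z y :=
    Fintype.sum_equiv (Equiv.addRight (c * d)) _ _ fun _ => rfl
  simp [Fintype.sum_prod_type_right, hshift, nsmul_eq_mul]

theorem sum_prod_add_mul_mul_add_mul (z : R → S) {i j : R} (hij : IsUnit (j - i)) :
    ∑ p : R × R, z (p.1 + i * p.2) * z (p.1 + j * p.2) = (∑ y, z y) ^ 2 := by
  have hshift (d : R) :
      ∑ x, z (x + i * d) * z (x + j * d) = ∑ y, z y * z (y + (j - i) * d) :=
    Fintype.sum_equiv (Equiv.addRight (i * d)) _ _ fun x => by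
      simp only [Equiv.coe_addRight]; ring_nf
  rw [Fintype.sum_prod_type_right]
  simp only [hshift]
  rw [Finset.sum_comm]
  simp only [← Finset.mul_sum, sum_add_unit_mul_eq_sum z _ hij, ← Finset.sum_mul, sq]

theorem sum_monochromatic_pattern (z : R → S) {i j k : R} (hij : IsUnit (j - i))
    (hik : IsUnit (k - i)) (hjk : IsUnit (k - j)) :
    ∑ p : R × R, (z (p.1 + i * p.2) * z (p.1 + j * p.2) * z (p.1 + k * p.2) +
        (1 - z (p.1 + i * p.2)) * (1 - z (p.1 + j * p.2)) * (1 - z (p.1 + k * p.2)))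
      = (Fintype.card R : S) ^ 2 - 3 * Fintype.card R * ∑ y, z y + 3 * (∑ y, z y) ^ 2 := by
  have hexpand (x y w : S) : x * y * w + (1 - x) * (1 - y) * (1 - w)
      = 1 - x - y - w + x * y + x * w + y * w := by ring
  simp only [hexpand, Finset.sum_add_distrib, Finset.sum_sub_distrib, sum_prod_add_mul,
    sum_prod_add_mul_mul_add_mul z hij, sum_prod_add_mul_mul_add_mul z hik,
    sum_prod_add_mul_mul_add_mul z hjk, Finset.sum_const, Finset.card_univ, Fintype.card_prod,
    nsmul_eq_mul, Nat.cast_mul, mul_one]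
  ring

end ThreeTermPatterns

theorem sum_eq_card_filter_eq_one {α S : Type*} [Fintype α] [AddCommMonoidWithOne S]
    [DecidableEq S] (z : α → S) (hz : ∀ i, z i = 0 ∨ z i = 1) :
    ∑ i, z i = #(univ.filter fun i => z i = 1) := by
  rw [natCast_card_filter]
  refine Finset.sum_congr rfl fun i _ => ?_
  rcases hz i with h | h <;> simp [h]

/-- For an odd prime n and z : Z_n → {0,1}, the sum over all (x,d) of
z(x)z(x+d)z(x+2d) + (1-z(x))(1-z(x+d))(1-z(x+2d)) equals n^2 - 3na + 3a^2,
where a = |{i : z(i) = 1}|. -/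
theorem stmt5 (n : ℕ) [Fact n.Prime] (hn : Odd n) (z : ZMod n → ℤ)
    (hz : ∀ i, z i = 0 ∨ z i = 1) (a : ℕ)
    (ha : (Finset.univ.filter (fun i : ZMod n => z i = 1)).card = a) :
    (∑ p : ZMod n × ZMod n,
      (z p.1 * z (p.1 + p.2) * z (p.1 + 2 * p.2) +
        (1 - z p.1) * (1 - z (p.1 + p.2)) * (1 - z (p.1 + 2 * p.2))))
      = (n : ℤ)^2 - 3 * n * a + 3 * a^2 := by
  have htwo : IsUnit (2 : ZMod n) := by
    exact_mod_cast (ZMod.isUnit_iff_coprime 2 n).mpr (Nat.coprime_two_left.mpr hn)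
  have hpattern := sum_monochromatic_pattern z (i := 0) (j := 1) (k := 2)
    (by simp) (by simpa using htwo) (by norm_num)
  simp only [zero_mul, add_zero, one_mul] at hpattern
  rw [hpattern, sum_eq_card_filter_eq_one z hz, ha, ZMod.card]
end

section
/- Let n be an odd prime, k = 3, and let σ, τ : Z_n → {true, false} be truth assignments agreeing on exactly αn variables. For a clause c' consisting of 3 literals whose underlying variables form a uniformly random ordered arithmetic progression (x, x+d, x+2d) with (x,d) uniform over Z_n × Z_n, and whose 3 signs are independent uniform bits, the probability that both σ and τ NAE-satisfy c' equals 1/2 + (1/4)(α^3 + (1-α)^3). -/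
/-- A clause: an AP of variables given by (x,d) together with three sign bits. -/
def NaeSat3 (n : ℕ) (σ : ZMod n → Bool)
    (c : (ZMod n × ZMod n) × Bool × Bool × Bool) : Prop :=
  ¬ (xor (σ c.1.1) c.2.1 = xor (σ (c.1.1 + c.1.2)) c.2.2.1 ∧
     xor (σ (c.1.1 + c.1.2)) c.2.2.1 = xor (σ (c.1.1 + 2 * c.1.2)) c.2.2.2)

instance (n : ℕ) (σ : ZMod n → Bool) (c : (ZMod n × ZMod n) × Bool × Bool × Bool) :
    Decidable (NaeSat3 n σ c) := by unfold NaeSat3; infer_instance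

/-!
Averaging over the signs first, a clause on a variable triple is NAE-satisfied by both `σ` and
`τ` for 6 of the 8 sign patterns if the agreement pattern `σ = τ` is constant on the triple,
and for 4 of them otherwise. It remains to count the progressions `(x, x+d, x+2d)` on which a
2-colouring `ε` of `ZMod n` is constant. A triple coloured by two colours has three
monochromatic pairs if it is monochromatic and exactly one otherwise; summing over all
progressions, and using that each of the three pairs `(x, x+d)`, `(x+d, x+2d)`, `(x, x+2d)`
runs over every pair of `ZMod n` exactly once when `2` is invertible, gives
`2 M + n² = 3 (a² + b²)` for the number `M` of monochromatic progressions and the colour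
classes of sizes `a`, `b`.
-/

open Finset

theorem sum_sum_add_mul_add_mul {R M : Type*} [CommRing R] [Fintype R] [AddCommMonoid M]
    (f : R → R → M) {i j : R} (hij : IsUnit (j - i)) :
    ∑ x, ∑ d, f (x + i * d) (x + j * d) = ∑ u, ∑ v, f u v :=
  calc ∑ x, ∑ d, f (x + i * d) (x + j * d)
      = ∑ d, ∑ u, f u (u + (j - i) * d) := by
        rw [sum_comm]
        refine sum_congr rfl fun d _ => Fintype.sum_equiv (Equiv.addRight (i * d)) _ _ fun x => ?_
        simp only [Equiv.coe_addRight]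
        ring_nf
    _ = ∑ u, ∑ v, f u v := by
        rw [sum_comm]
        exact sum_congr rfl fun u _ =>
          Fintype.sum_equiv ((Units.mulLeft hij.unit).trans (Equiv.addLeft u)) _ _ fun _ => rfl

theorem sum_sum_ite_apply_eq_apply {α : Type*} [Fintype α] (ε : α → Bool) :
    ∑ u, ∑ v, (if ε u = ε v then 1 else 0 : ℕ) = #{x | ε x} ^ 2 + #{x | ¬ ε x} ^ 2 := by
  have split : ∀ u v, (if ε u = ε v then 1 else 0 : ℕ) =
      (if ε u then 1 else 0) * (if ε v then 1 else 0) +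
        (if ¬ ε u then 1 else 0) * (if ¬ ε v then 1 else 0) := by
    intro u v
    cases ε u <;> cases ε v <;> rfl
  simp only [split, sum_add_distrib, ← mul_sum, ← sum_mul, ← card_filter]
  ring

theorem two_mul_ite_and_add_one (e₁ e₂ e₃ : Bool) :
    2 * (if e₁ = e₂ ∧ e₂ = e₃ then 1 else 0) + 1 =
      (if e₁ = e₂ then 1 else 0) + (if e₂ = e₃ then 1 else 0) + (if e₁ = e₃ then 1 else 0) := by
  decide +revert

theorem two_mul_card_monochromatic_ap3_add_sq {R : Type*} [CommRing R] [Fintype R]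
    (h2 : IsUnit (2 : R)) (ε : R → Bool) :
    2 * #{p : R × R | ε p.1 = ε (p.1 + p.2) ∧ ε (p.1 + p.2) = ε (p.1 + 2 * p.2)} +
        Fintype.card R ^ 2 = 3 * (#{x | ε x} ^ 2 + #{x | ¬ ε x} ^ 2) := by
  let c : R → R → ℕ := fun u v => if ε u = ε v then 1 else 0
  have pairs : ∀ i j : R, IsUnit (j - i) →
      ∑ x, ∑ d, c (x + i * d) (x + j * d) = #{x | ε x} ^ 2 + #{x | ¬ ε x} ^ 2 :=
    fun i j hij => (sum_sum_add_mul_add_mul c hij).trans (sum_sum_ite_apply_eq_apply ε)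
  have h01 := pairs 0 1 (by simp)
  have h12 := pairs 1 2 (by norm_num)
  have h02 := pairs 0 2 (by simpa using h2)
  simp only [zero_mul, add_zero, one_mul] at h01 h12 h02
  calc _ = ∑ x, ∑ d, (2 * (if ε x = ε (x + d) ∧ ε (x + d) = ε (x + 2 * d) then 1 else 0) + 1) := by
        rw [card_filter, Fintype.sum_prod_type]
        simp only [sum_add_distrib, mul_sum, sum_const, card_univ, smul_eq_mul, mul_one, sq]
    _ = ∑ x, ∑ d, (c x (x + d) + c (x + d) (x + 2 * d) + c x (x + 2 * d)) := by
        simp only [two_mul_ite_and_add_one, c]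
    _ = _ := by
        simp only [sum_add_distrib, h01, h12, h02]
        ring

theorem card_nae_and_nae (s₁ s₂ s₃ t₁ t₂ t₃ : Bool) :
    #{b : Bool × Bool × Bool | ¬ (xor s₁ b.1 = xor s₂ b.2.1 ∧ xor s₂ b.2.1 = xor s₃ b.2.2) ∧
        ¬ (xor t₁ b.1 = xor t₂ b.2.1 ∧ xor t₂ b.2.1 = xor t₃ b.2.2)} =
      4 + 2 * (if (s₁ == t₁) = (s₂ == t₂) ∧ (s₂ == t₂) = (s₃ == t₃) then 1 else 0) := by
  decide +revert

theorem card_naeSat3_and_naeSat3 {n : ℕ} [NeZero n] (σ τ : ZMod n → Bool) :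
    #{c | NaeSat3 n σ c ∧ NaeSat3 n τ c} = 4 * n ^ 2 + 2 * #{p : ZMod n × ZMod n |
      (σ p.1 == τ p.1) = (σ (p.1 + p.2) == τ (p.1 + p.2)) ∧
        (σ (p.1 + p.2) == τ (p.1 + p.2)) = (σ (p.1 + 2 * p.2) == τ (p.1 + 2 * p.2))} := by
  rw [card_filter, Fintype.sum_prod_type]
  have hp : ∀ p : ZMod n × ZMod n, ∑ b, (if NaeSat3 n σ (p, b) ∧ NaeSat3 n τ (p, b) then 1 else 0)
      = 4 + 2 * (if (σ p.1 == τ p.1) = (σ (p.1 + p.2) == τ (p.1 + p.2)) ∧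
        (σ (p.1 + p.2) == τ (p.1 + p.2)) = (σ (p.1 + 2 * p.2) == τ (p.1 + 2 * p.2)) then 1 else 0) :=
    fun p => (card_filter _ _).symm.trans (card_nae_and_nae ..)
  simp only [hp, sum_add_distrib, ← mul_sum, ← card_filter, sum_const, card_univ, smul_eq_mul,
    Fintype.card_prod, ZMod.card, sq]
  ring

/-- For an odd prime n and assignments σ, τ agreeing on exactly αn
variables, the probability (uniform over the n^2·8 clauses whose variables form an
ordered 3-term AP and whose signs are uniform bits) that both σ and τ NAE-satisfy the
clause equals 1/2 + (1/4)(α^3 + (1-α)^3). -/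
theorem stmt8 (n : ℕ) [Fact n.Prime] (hn : Odd n) (σ τ : ZMod n → Bool) (α : ℝ)
    (hα : ((Finset.univ.filter (fun i : ZMod n => σ i = τ i)).card : ℝ) = α * n) :
    ((Finset.univ.filter (fun c : (ZMod n × ZMod n) × Bool × Bool × Bool =>
        NaeSat3 n σ c ∧ NaeSat3 n τ c)).card : ℝ) / ((n : ℝ)^2 * 8)
      = 1/2 + (1/4) * (α^3 + (1 - α)^3) := by
  have h2 : IsUnit (2 : ZMod n) := (ZMod.isUnit_iff_coprime 2 n).2 (Nat.coprime_two_left.2 hn)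
  have hAP := two_mul_card_monochromatic_ap3_add_sq h2 (fun i => σ i == τ i)
  have hsplit := card_filter_add_card_filter_not (s := univ) (fun i => σ i = τ i)
  simp only [beq_iff_eq, card_univ, ZMod.card] at hAP hsplit
  have hdisagree : (#{i | ¬ σ i = τ i} : ℝ) = n - α * n := by
    rw [← hα, eq_sub_iff_add_eq, add_comm]
    exact_mod_cast hsplit
  rw [card_naeSat3_and_naeSat3, div_eq_iff (by simp [NeZero.ne n])]
  rify at hAP
  rw [hα, hdisagree] at hAP
  push_cast
  linear_combination hAP
end
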